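/- arXiv:2306.11008 — 2 statements merged into one kernel-verified Lean document; each statement's English description precedes it below -/
import Mathlib

section
/- Let G be a mixed graph and let G_underline(t) be obtained from G by removing all directed edges out of vertex t. Suppose in G: (i) every child of t belongs to a set B, (ii) B is d-separated from y given {t} ∪ Z in G (where Z = Z^(i) ∪ Z^(o)), and there is a bi-directed edge between t and y. Then any path from t to a vertex b ∈ B in G_underline(t) that is active given Z must begin with an edge into t (i.e., of the form t ← ⋯ or t ↔ ⋯); extending such a path by the bi-directed edge y ↔ t yields a path from y to b that is active given {t} ∪ Z, contradicting (ii). Hence t is d-separated from B given Z in G_underline(t). -/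
/-- A mixed graph: directed edges plus symmetric bi-directed edges. -/
structure MixedGraph (V : Type) where
  dir : V → V → Prop
  bi : V → V → Prop
  bi_symm : ∀ {u v}, bi u v → bi v u

/-- Orientation of an edge as traversed along a path. -/
inductive EKind | fw | bw | bd
  deriving DecidableEq

namespace MixedGraph

variable {V : Type}

/-- A step of a path: source vertex, edge kind, target vertex. -/
abbrev Step (V : Type) := V × EKind × V

/-- Whether a step is an actual edge of the graph. -/
def stepOK (G : MixedGraph V) : Step V → Prop
  | (u, .fw, v) => G.dir u v
  | (u, .bw, v) => G.dir v u
  | (u, .bd, v) => G.bi u v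

/-- An edge of this kind has an arrowhead at the target of the step. -/
def headArrow : EKind → Prop
  | .fw => True
  | .bw => False
  | .bd => True

/-- An edge of this kind has an arrowhead at the source of the step. -/
def tailArrow : EKind → Prop
  | .fw => False
  | .bw => True
  | .bd => True

/-- Consecutive steps must share their endpoint vertices. -/
def chainOK : List (Step V) → Prop
  | [] => True
  | [_] => True
  | (_, _, b) :: (c, k, d) :: rest => b = c ∧ chainOK ((c, k, d) :: rest)

/-- The vertex sequence of a path starting at `u`. -/
def verts (u : V) (steps : List (Step V)) : List V :=
  u :: steps.map (fun s => s.2.2)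

/-- `steps` is a path from `u` to `v` in the mixed graph `G`:
a nonempty sequence of edges with matching endpoints and distinct vertices. -/
structure IsPath (G : MixedGraph V) (u v : V) (steps : List (Step V)) : Prop where
  nonempty : steps ≠ []
  startOK : (steps.head?).map (fun s => s.1) = some u
  endOK : (steps.getLast?).map (fun s => s.2.2) = some v
  chain : chainOK steps
  edges : ∀ s ∈ steps, G.stepOK s
  nodup : (verts u steps).Nodup

/-- The interior vertices of the path that are colliders: both incident path
edges have an arrowhead at the vertex. -/
def colliders : List (Step V) → Set V
  | (_, k, b) :: (c, k', d) :: rest =>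
      {w | w = b ∧ headArrow k ∧ tailArrow k'} ∪ colliders ((c, k', d) :: rest)
  | _ => ∅

/-- All interior vertices of the path. -/
def interior : List (Step V) → Set V
  | (_, _, b) :: (c, k', d) :: rest => {b} ∪ interior ((c, k', d) :: rest)
  | _ => ∅

/-- `v` is `u` or a directed descendant of `u`. -/
def desc (G : MixedGraph V) (u v : V) : Prop := Relation.ReflTransGen G.dir u v

/-- A path is active (unblocked) given a conditioning set `S`: every interior
non-collider is outside `S`, and every collider is in `S` or has a directed
descendant in `S`. -/
def Active (G : MixedGraph V) (S : Set V) (steps : List (Step V)) : Prop :=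
  (∀ w ∈ interior steps \ colliders steps, w ∉ S) ∧
  (∀ w ∈ colliders steps, ∃ d ∈ S, G.desc w d)

/-- d-separation of vertex sets: every path from `V₁` to `V₂` is blocked by `V₃`. -/
def dSep (G : MixedGraph V) (V₁ V₂ V₃ : Set V) : Prop :=
  ∀ u ∈ V₁, ∀ v ∈ V₂, ∀ steps, G.IsPath u v steps → ¬ G.Active V₃ steps

/-- The directed part of the graph is acyclic. -/
def Acyclic (G : MixedGraph V) : Prop := ∀ v, ¬ Relation.TransGen G.dir v v

/-- The graph `G` with all directed edges out of `t` removed. -/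
def under (G : MixedGraph V) (t : V) : MixedGraph V where
  dir u v := G.dir u v ∧ u ≠ t
  bi := G.bi
  bi_symm := fun h => G.bi_symm h

end MixedGraph

namespace MixedGraph

variable {V : Type}

/-- Reverse an edge kind. -/
def rk : EKind → EKind | .fw => .bw | .bw => .fw | .bd => .bd

/-- Reverse a step. -/
def rstep : Step V → Step V | (u, k, v) => (v, rk k, u)

@[simp] lemma rstep_fst (s : Step V) : (rstep s).1 = s.2.2 := by obtain ⟨u,k,v⟩ := s; rfl
@[simp] lemma rstep_tgt (s : Step V) : (rstep s).2.2 = s.1 := by obtain ⟨u,k,v⟩ := s; rfl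
@[simp] lemma rstep_kind (s : Step V) : (rstep s).2.1 = rk s.2.1 := by obtain ⟨u,k,v⟩ := s; rfl

@[simp] lemma headArrow_rk (k : EKind) : headArrow (rk k) ↔ tailArrow k := by
  cases k <;> simp [headArrow, tailArrow, rk]
@[simp] lemma tailArrow_rk (k : EKind) : tailArrow (rk k) ↔ headArrow k := by
  cases k <;> simp [headArrow, tailArrow, rk]

lemma stepOK_rstep (G : MixedGraph V) (s : Step V) : G.stepOK (rstep s) ↔ G.stepOK s := by
  obtain ⟨u,k,v⟩ := s
  cases k <;> simp [stepOK, rstep, rk]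
  exact ⟨G.bi_symm, G.bi_symm⟩

/-- The reversal of a list of steps. -/
def rev (l : List (Step V)) : List (Step V) := (l.map rstep).reverse

/-- The list of adjacent pairs of steps. -/
def pr (l : List (Step V)) : List (Step V × Step V) := l.zip l.tail

lemma pr_cons_cons (a b : Step V) (l : List (Step V)) : pr (a::b::l) = (a,b) :: pr (b::l) := rfl
@[simp] lemma pr_nil : pr ([] : List (Step V)) = [] := rfl
@[simp] lemma pr_single (a : Step V) : pr [a] = [] := rfl

lemma pr_fst_mem {l : List (Step V)} {p} (h : p ∈ pr l) : p.1 ∈ l := by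
  obtain ⟨a, b⟩ := p
  exact (List.of_mem_zip h).1

lemma pr_snd_mem {l : List (Step V)} {p} (h : p ∈ pr l) : p.2 ∈ l := by
  obtain ⟨a, b⟩ := p
  exact List.mem_of_mem_tail (List.of_mem_zip h).2

lemma mem_colliders_iff : ∀ {l : List (Step V)} {w : V},
    w ∈ colliders l ↔ ∃ p ∈ pr l, p.1.2.2 = w ∧ headArrow p.1.2.1 ∧ tailArrow p.2.2.1
  | [], w => by simp [colliders]
  | [(a1,ak,a2)], w => by simp [colliders]
  | ((a1,ak,a2) :: (b1,bk,b2) :: l), w => by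
    rw [pr_cons_cons]
    simp only [colliders, Set.mem_union, Set.mem_setOf_eq, List.mem_cons,
      mem_colliders_iff (l := (b1,bk,b2) :: l)]
    constructor
    · rintro (⟨rfl, h1, h2⟩ | ⟨p, hp, hw, h1, h2⟩)
      · exact ⟨_, Or.inl rfl, rfl, h1, h2⟩
      · exact ⟨p, Or.inr hp, hw, h1, h2⟩
    · rintro ⟨p, (rfl | hp), hw, h1, h2⟩
      · exact Or.inl ⟨hw.symm, h1, h2⟩
      · exact Or.inr ⟨p, hp, hw, h1, h2⟩

lemma mem_interior_iff : ∀ {l : List (Step V)} {w : V},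
    w ∈ interior l ↔ ∃ p ∈ pr l, p.1.2.2 = w
  | [], w => by simp [interior]
  | [(a1,ak,a2)], w => by simp [interior]
  | ((a1,ak,a2) :: (b1,bk,b2) :: l), w => by
    rw [pr_cons_cons]
    simp only [interior, Set.mem_union, Set.mem_singleton_iff, List.mem_cons,
      mem_interior_iff (l := (b1,bk,b2) :: l)]
    constructor
    · rintro (rfl | ⟨p, hp, hw⟩)
      · exact ⟨_, Or.inl rfl, rfl⟩
      · exact ⟨p, Or.inr hp, hw⟩
    · rintro ⟨p, (rfl | hp), hw⟩
      · exact Or.inl hw.symm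
      · exact Or.inr ⟨p, hp, hw⟩

lemma chainOK_iff : ∀ {l : List (Step V)},
    chainOK l ↔ ∀ p ∈ pr l, p.1.2.2 = p.2.1
  | [] => by simp [chainOK]
  | [(a1,ak,a2)] => by simp [chainOK]
  | ((a1,ak,a2) :: (b1,bk,b2) :: l) => by
    rw [pr_cons_cons]
    simp only [chainOK, chainOK_iff (l := (b1,bk,b2) :: l), List.mem_cons]
    constructor
    · rintro ⟨h1, h2⟩ p (rfl | hp)
      · exact h1
      · exact h2 p hp
    · intro h
      exact ⟨h _ (Or.inl rfl), fun p hp => h p (Or.inr hp)⟩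

lemma mem_pr_append : ∀ {l₁ l₂ : List (Step V)} {p},
    p ∈ pr (l₁ ++ l₂) ↔
      p ∈ pr l₁ ∨ p ∈ pr l₂ ∨ (l₁.getLast? = some p.1 ∧ l₂.head? = some p.2)
  | [], l₂, p => by simp
  | [a], l₂, p => by
    cases l₂ with
    | nil => simp
    | cons c l₂' =>
      rw [List.singleton_append, pr_cons_cons]
      simp only [List.mem_cons, pr_single, List.not_mem_nil, false_or,
        List.getLast?_singleton, List.head?_cons, Option.some_inj]
      constructor
      · rintro (rfl | h)
        · exact Or.inr ⟨rfl, rfl⟩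
        · exact Or.inl h
      · rintro (h | ⟨h1, h2⟩)
        · exact Or.inr h
        · exact Or.inl (by obtain ⟨p1, p2⟩ := p; cases h1; cases h2; rfl)
  | (a :: b :: l), l₂, p => by
    rw [List.cons_append, List.cons_append, pr_cons_cons, ← List.cons_append,
      List.getLast?_cons_cons, pr_cons_cons]
    simp only [List.mem_cons, mem_pr_append (l₁ := b :: l)]
    tauto

lemma mem_pr_reverse : ∀ {l : List (Step V)} {p},
    p ∈ pr l.reverse ↔ (p.2, p.1) ∈ pr l
  | [], p => by simp
  | (a :: l), p => by
    rw [List.reverse_cons, mem_pr_append]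
    simp only [mem_pr_reverse (l := l), List.getLast?_reverse, pr_single,
      List.head?_cons, Option.some_inj, List.not_mem_nil, false_or]
    cases l with
    | nil => simp
    | cons c l' =>
      rw [pr_cons_cons]
      simp only [List.mem_cons, List.head?_cons, Option.some_inj]
      constructor
      · rintro (h | ⟨h1, h2⟩)
        · exact Or.inr h
        · exact Or.inl (by rw [h2, ← h1])
      · rintro (h | h)
        · obtain ⟨h1, h2⟩ := Prod.mk.inj h
          exact Or.inr ⟨h2.symm, h1.symm⟩
        · exact Or.inl h

lemma mem_pr_map {f : Step V → Step V} : ∀ {l : List (Step V)} {p},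
    p ∈ pr (l.map f) ↔ ∃ q ∈ pr l, p = (f q.1, f q.2) := by
  intro l p
  unfold pr
  rw [show (l.map f).tail = l.tail.map f from List.map_tail.symm,
    List.zip_map, List.mem_map]
  constructor
  · rintro ⟨q, hq, rfl⟩
    exact ⟨q, hq, by obtain ⟨q1, q2⟩ := q; rfl⟩
  · rintro ⟨q, hq, rfl⟩
    exact ⟨q, hq, by obtain ⟨q1, q2⟩ := q; rfl⟩

lemma mem_pr_rev {l : List (Step V)} {p} :
    p ∈ pr (rev l) ↔ ∃ q ∈ pr l, p = (rstep q.2, rstep q.1) := by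
  rw [rev, mem_pr_reverse, mem_pr_map]
  constructor
  · rintro ⟨q, hq, h⟩
    refine ⟨q, hq, ?_⟩
    obtain ⟨p1, p2⟩ := p
    simp only [Prod.ext_iff] at h ⊢
    exact ⟨h.2, h.1⟩
  · rintro ⟨q, hq, h⟩
    refine ⟨q, hq, ?_⟩
    obtain ⟨p1, p2⟩ := p
    simp only [Prod.ext_iff] at h ⊢
    exact ⟨h.2, h.1⟩

lemma srcs_eq : ∀ {l : List (Step V)} {u v : V}, chainOK l →
    l.head?.map (·.1) = some u → l.getLast?.map (·.2.2) = some v →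
    l.map (·.1) ++ [v] = u :: l.map (·.2.2)
  | [], u, v => by simp
  | [a], u, v => by
    intro _ h1 h2
    simp only [List.head?_cons, Option.map_some, Option.some_inj,
      List.getLast?_singleton] at h1 h2
    simp [h1, h2]
  | (a :: b :: l), u, v => by
    intro hc h1 h2
    obtain ⟨hab, hc'⟩ : a.2.2 = b.1 ∧ chainOK (b :: l) := by
      obtain ⟨a1, ak, a2⟩ := a; obtain ⟨b1, bk, b2⟩ := b
      exact hc
    simp only [List.head?_cons, Option.map_some, Option.some_inj] at h1
    rw [List.getLast?_cons_cons] at h2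
    have ih := srcs_eq (l := b :: l) (u := b.1) (v := v) hc' (by simp) h2
    show a.1 :: List.map (·.1) (b :: l) ++ [v] = u :: a.2.2 :: List.map (·.2.2) (b :: l)
    rw [h1, hab, ← ih, List.cons_append]

lemma verts_rev {G : MixedGraph V} {u v : V} {l : List (Step V)}
    (h : G.IsPath u v l) : verts v (rev l) = (verts u l).reverse := by
  have h1 : (rev l).map (·.2.2) = (l.map (·.1)).reverse := by
    have he : ((fun s : Step V => s.2.2) ∘ rstep) = fun s : Step V => s.1 :=
      funext fun s => rstep_tgt s
    rw [rev, List.map_reverse, List.map_map, he]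
  have h2 := congrArg List.reverse (srcs_eq h.chain h.startOK h.endOK)
  rw [List.reverse_append, List.reverse_singleton, List.reverse_cons] at h2
  rw [verts, verts, h1, List.reverse_cons, ← h2]
  rfl

lemma rev_head? {l : List (Step V)} : (rev l).head? = l.getLast?.map rstep := by
  rw [rev, List.head?_reverse, List.getLast?_map]

lemma rev_getLast? {l : List (Step V)} : (rev l).getLast? = l.head?.map rstep := by
  rw [rev, List.getLast?_reverse, List.head?_map]

lemma isPath_rev {G : MixedGraph V} {u v : V} {l : List (Step V)}
    (h : G.IsPath u v l) : G.IsPath v u (rev l) := by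
  refine ⟨?_, ?_, ?_, ?_, ?_, ?_⟩
  · simp only [rev, ne_eq, List.reverse_eq_nil_iff, List.map_eq_nil_iff]
    exact h.nonempty
  · rw [rev_head?, Option.map_map]
    have : ((fun s : Step V => s.1) ∘ rstep) = (fun s : Step V => s.2.2) :=
      funext fun s => rstep_fst s
    rw [this]
    exact h.endOK
  · rw [rev_getLast?, Option.map_map]
    have : ((fun s : Step V => s.2.2) ∘ rstep) = (fun s : Step V => s.1) :=
      funext fun s => rstep_tgt s
    rw [this]
    exact h.startOK
  · rw [chainOK_iff]
    rintro p hp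
    obtain ⟨q, hq, rfl⟩ := mem_pr_rev.mp hp
    have := chainOK_iff.mp h.chain q hq
    simp [this]
  · intro s hs
    rw [rev, List.mem_reverse, List.mem_map] at hs
    obtain ⟨q, hq, rfl⟩ := hs
    exact (stepOK_rstep G q).mpr (h.edges q hq)
  · rw [verts_rev h]
    exact List.nodup_reverse.mpr h.nodup

lemma colliders_rev {l : List (Step V)} (hc : chainOK l) :
    colliders (rev l) = colliders l := by
  ext w
  rw [mem_colliders_iff, mem_colliders_iff]
  constructor
  · rintro ⟨p, hp, hw, h1, h2⟩
    obtain ⟨q, hq, rfl⟩ := mem_pr_rev.mp hp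
    simp only [rstep_tgt, rstep_kind, headArrow_rk, tailArrow_rk] at hw h1 h2
    exact ⟨q, hq, (chainOK_iff.mp hc q hq).trans hw, h2, h1⟩
  · rintro ⟨q, hq, hw, h1, h2⟩
    refine ⟨(rstep q.2, rstep q.1), mem_pr_rev.mpr ⟨q, hq, rfl⟩, ?_, ?_, ?_⟩
    · simpa using (chainOK_iff.mp hc q hq).symm.trans hw
    · simpa using h2
    · simpa using h1

lemma interior_rev {l : List (Step V)} (hc : chainOK l) :
    interior (rev l) = interior l := by
  ext w
  rw [mem_interior_iff, mem_interior_iff]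
  constructor
  · rintro ⟨p, hp, hw⟩
    obtain ⟨q, hq, rfl⟩ := mem_pr_rev.mp hp
    simp only [rstep_tgt] at hw
    exact ⟨q, hq, (chainOK_iff.mp hc q hq).trans hw⟩
  · rintro ⟨q, hq, hw⟩
    refine ⟨(rstep q.2, rstep q.1), mem_pr_rev.mpr ⟨q, hq, rfl⟩, ?_⟩
    simpa using (chainOK_iff.mp hc q hq).symm.trans hw

lemma interior_sub_tgts {l : List (Step V)} {w : V} (h : w ∈ interior l) :
    w ∈ l.map (·.2.2) := by
  obtain ⟨p, hp, rfl⟩ := mem_interior_iff.mp h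
  exact List.mem_map.mpr ⟨p.1, pr_fst_mem hp, rfl⟩

lemma stepOK_under {G : MixedGraph V} {t : V} {s : Step V}
    (h : (G.under t).stepOK s) : G.stepOK s := by
  obtain ⟨u, k, v⟩ := s
  cases k
  · exact h.1
  · exact h.1
  · exact h

lemma desc_under {G : MixedGraph V} {t u v : V}
    (h : (G.under t).desc u v) : G.desc u v := by
  unfold desc at h ⊢
  induction h with
  | refl => exact Relation.ReflTransGen.refl
  | tail _ hd ih => exact ih.tail hd.1

lemma isPath_of_under {G : MixedGraph V} {t u v : V} {l : List (Step V)}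
    (h : (G.under t).IsPath u v l) : G.IsPath u v l :=
  ⟨h.nonempty, h.startOK, h.endOK, h.chain, fun s hs => stepOK_under (h.edges s hs), h.nodup⟩


end MixedGraph


open MixedGraph in
/-- If every child of `t` belongs to `B`, `t ↔ y` is a bi-directed edge, and
`B` is d-separated from `y` given `{t} ∪ Z` in `G`, then `t` is d-separated
from `B` given `Z` in `G` with the out-edges of `t` removed: any `Z`-active
path from `t` to `b ∈ B` in `G_underline(t)` must start with an edge into `t`,
and prepending the edge `y ↔ t` would give a path from `y` to `b` active given
`{t} ∪ Z`, a contradiction. -/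
theorem t_dsep_B_in_under {V : Type} (G : MixedGraph V)
    (t y : V) (B Z : Set V)
    (hchild : ∀ v, G.dir t v → v ∈ B)
    (hty : G.bi t y)
    (htB : t ∉ B) (hyB : y ∉ B) (htZ : t ∉ Z) (hyZ : y ∉ Z) (hne : t ≠ y)
    (hsep : G.dSep B {y} ({t} ∪ Z)) :
    (G.under t).dSep {t} B Z := by
  
  intro t' ht' b hb steps hpath hact
  rw [Set.mem_singleton_iff.mp ht'] at hpath
  have hpG : G.IsPath t b steps := isPath_of_under hpath
  have hvn : (t :: steps.map (fun s => s.2.2)).Nodup := hpG.nodup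
  have htn : t ∉ steps.map (fun s => s.2.2) := (List.nodup_cons.mp hvn).1
  by_cases hy : y ∈ verts t steps
  · -- y lies on the path: use the reversed suffix from y to b
    have hy' : y ∈ steps.map (fun s => s.2.2) := by
      rcases List.mem_cons.mp (show y ∈ t :: steps.map (fun s => s.2.2) from hy) with h | h
      · exact absurd h.symm hne
      · exact h
    obtain ⟨s, hs, hsy⟩ := List.mem_map.mp hy'
    obtain ⟨l₁, l₂, rfl⟩ := List.append_of_mem hs
    cases l₂ with
    | nil =>
      have hb' : s.2.2 = b := by
        have h := hpG.endOK
        rw [show l₁ ++ [s] = l₁ ++ [s] from rfl, List.getLast?_concat] at h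
        simpa using h
      exact hyB (show y ∈ B from (hsy ▸ hb' : y = b) ▸ hb)
    | cons q l₂' =>
      have hsplit : l₁ ++ s :: q :: l₂' = (l₁ ++ [s]) ++ (q :: l₂') := by simp
      have hsQ : (s, q) ∈ pr (l₁ ++ s :: q :: l₂') := by
        rw [hsplit, mem_pr_append]
        exact Or.inr (Or.inr ⟨List.getLast?_concat, rfl⟩)
      have hq1 : q.1 = y := (chainOK_iff.mp hpG.chain _ hsQ).symm.trans hsy
      have hverts : verts t (l₁ ++ s :: q :: l₂') =
          (t :: l₁.map (fun s => s.2.2)) ++ verts y (q :: l₂') := by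
        simp [verts, hsy]
      have hQnodup : (verts y (q :: l₂')).Nodup := by
        have h := hpG.nodup
        rw [hverts] at h
        exact (List.sublist_append_right _ _).nodup h
      have hQpath : G.IsPath y b (q :: l₂') := by
        refine ⟨by simp, by simp [hq1], ?_, ?_, ?_, hQnodup⟩
        · have h := hpG.endOK
          rw [hsplit, List.getLast?_append_of_ne_nil _ (by simp)] at h
          exact h
        · rw [chainOK_iff]
          intro p hp
          refine chainOK_iff.mp hpG.chain p ?_
          rw [hsplit, mem_pr_append]
          exact Or.inr (Or.inl hp)
        · intro e he
          exact hpG.edges e (List.mem_append_right _ (List.mem_cons_of_mem _ he))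
      have hQchain := hQpath.chain
      refine hsep b hb y rfl (rev (q :: l₂')) (isPath_rev hQpath) ⟨?_, ?_⟩
      · intro w hw
        rw [Set.mem_diff, interior_rev hQchain, colliders_rev hQchain] at hw
        obtain ⟨hwi, hwc⟩ := hw
        have hwQ : w ∈ (q :: l₂').map (fun s => s.2.2) := interior_sub_tgts hwi
        have hwsteps : w ∈ (l₁ ++ s :: q :: l₂').map (fun s => s.2.2) := by
          simp only [List.map_append, List.map_cons, List.mem_append, List.mem_cons,
            List.mem_map] at hwQ ⊢
          tauto
        have hwt : w ≠ t := fun h => htn (h ▸ hwsteps)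
        have hwy : w ≠ y := by
          intro h
          exact (List.nodup_cons.mp hQnodup).1 (h ▸ hwQ)
        have hwintS : w ∈ interior (l₁ ++ s :: q :: l₂') := by
          obtain ⟨p, hp, hpw⟩ := mem_interior_iff.mp hwi
          refine mem_interior_iff.mpr ⟨p, ?_, hpw⟩
          rw [hsplit, mem_pr_append]
          exact Or.inr (Or.inl hp)
        have hwcolS : w ∉ colliders (l₁ ++ s :: q :: l₂') := by
          intro hcol
          obtain ⟨p, hp, hpw, hh, ht'⟩ := mem_colliders_iff.mp hcol
          rw [hsplit, mem_pr_append] at hp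
          rcases hp with hp | hp | ⟨hp1, hp2⟩
          · have h1 : w ∈ (l₁ ++ [s]).map (fun s => s.2.2) :=
              List.mem_map.mpr ⟨p.1, pr_fst_mem hp, hpw⟩
            have hnd : ((l₁ ++ [s]).map (fun s => s.2.2)).Disjoint
                ((q :: l₂').map (fun s => s.2.2)) := by
              have h2 := (List.nodup_cons.mp hvn).2
              rw [hsplit, List.map_append] at h2
              exact List.disjoint_of_nodup_append h2
            exact hnd h1 hwQ
          · exact hwc (mem_colliders_iff.mpr ⟨p, hp, hpw, hh, ht'⟩)
          · rw [List.getLast?_concat, Option.some_inj] at hp1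
            exact hwy (by rw [← hpw, ← hp1, hsy])
        have hwZ : w ∉ Z := hact.1 w ⟨hwintS, hwcolS⟩
        rintro (h | h)
        · exact hwt h
        · exact hwZ h
      · intro w hw
        rw [colliders_rev hQchain] at hw
        obtain ⟨p, hp, hpw, hh, ht'⟩ := mem_colliders_iff.mp hw
        have hwS : w ∈ colliders (l₁ ++ s :: q :: l₂') := by
          refine mem_colliders_iff.mpr ⟨p, ?_, hpw, hh, ht'⟩
          rw [hsplit, mem_pr_append]
          exact Or.inr (Or.inl hp)
        obtain ⟨d, hdZ, hdesc⟩ := hact.2 w hwS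
        exact ⟨d, Or.inr hdZ, desc_under hdesc⟩
  · -- y is not on the path: reverse the whole path and append the edge t ↔ y
    obtain ⟨s₀, rest, rfl⟩ : ∃ s₀ rest, steps = s₀ :: rest := by
      cases steps with
      | nil => exact absurd rfl hpath.nonempty
      | cons a l => exact ⟨a, l, rfl⟩
    have hs₀1 : s₀.1 = t := by simpa using hpG.startOK
    have htail : tailArrow s₀.2.1 := by
      have he := hpath.edges s₀ List.mem_cons_self
      obtain ⟨u, k, v⟩ := s₀
      simp only at hs₀1
      cases k with
      | fw => exact absurd hs₀1 he.2
      | bw => trivial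
      | bd => trivial
    have hR : G.IsPath b t (rev (s₀ :: rest)) := isPath_rev hpG
    have hRlast : (rev (s₀ :: rest)).getLast? = some (rstep s₀) := by
      rw [rev_getLast?]; rfl
    have hRne : rev (s₀ :: rest) ≠ [] := hR.nonempty
    have hNpath : G.IsPath b y (rev (s₀ :: rest) ++ [(t, EKind.bd, y)]) := by
      refine ⟨by simp, ?_, ?_, ?_, ?_, ?_⟩
      · cases hrev : rev (s₀ :: rest) with
        | nil => exact absurd hrev hRne
        | cons r R' =>
          have h := hR.startOK
          rw [hrev] at h
          simpa using h
      · rw [List.getLast?_concat]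
        rfl
      · rw [chainOK_iff]
        intro p hp
        rw [mem_pr_append] at hp
        rcases hp with hp | hp | ⟨hp1, hp2⟩
        · exact chainOK_iff.mp hR.chain p hp
        · simp at hp
        · rw [hRlast, Option.some_inj] at hp1
          simp only [List.head?_cons, Option.some_inj] at hp2
          rw [← hp1, ← hp2]
          simpa using hs₀1
      · intro e he
        rcases List.mem_append.mp he with he | he
        · exact hR.edges e he
        · rw [List.mem_singleton] at he
          rw [he]
          exact hty
      · have hv : verts b (rev (s₀ :: rest) ++ [(t, EKind.bd, y)]) =
            verts b (rev (s₀ :: rest)) ++ [y] := by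
          simp [verts]
        rw [hv, verts_rev hpG]
        refine (List.nodup_reverse.mpr hpG.nodup).append (List.nodup_singleton y) ?_
        intro a ha hay
        rw [List.mem_singleton] at hay
        subst hay
        exact hy (List.mem_reverse.mp ha)
    have htcol : t ∈ colliders (rev (s₀ :: rest) ++ [(t, EKind.bd, y)]) := by
      refine mem_colliders_iff.mpr ⟨(rstep s₀, (t, EKind.bd, y)), ?_, ?_, ?_, ?_⟩
      · rw [mem_pr_append]
        exact Or.inr (Or.inr ⟨hRlast, rfl⟩)
      · simpa using hs₀1
      · rw [rstep_kind, headArrow_rk]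
        exact htail
      · trivial
    refine hsep b hb y rfl _ hNpath ⟨?_, ?_⟩
    · intro w hw
      obtain ⟨hwi, hwc⟩ := hw
      obtain ⟨p, hp, hpw⟩ := mem_interior_iff.mp hwi
      rw [mem_pr_append] at hp
      rcases hp with hp | hp | ⟨hp1, hp2⟩
      · have hwiR : w ∈ interior (rev (s₀ :: rest)) := mem_interior_iff.mpr ⟨p, hp, hpw⟩
        rw [interior_rev hpG.chain] at hwiR
        have hwt : w ≠ t := fun h => htn (h ▸ interior_sub_tgts hwiR)
        have hwncol : w ∉ colliders (s₀ :: rest) := by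
          intro h
          rw [← colliders_rev hpG.chain] at h
          obtain ⟨p', hp', h1, h2, h3⟩ := mem_colliders_iff.mp h
          exact hwc (mem_colliders_iff.mpr ⟨p', mem_pr_append.mpr (Or.inl hp'), h1, h2, h3⟩)
        have hwZ := hact.1 w ⟨hwiR, hwncol⟩
        rintro (h | h)
        · exact hwt h
        · exact hwZ h
      · simp at hp
      · rw [hRlast, Option.some_inj] at hp1
        have hwt : w = t := by rw [← hpw, ← hp1]; simpa using hs₀1
        intro _
        rw [hwt] at hwc
        exact hwc htcol
    · intro w hw
      obtain ⟨p, hp, hpw, hh, htl⟩ := mem_colliders_iff.mp hw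
      rw [mem_pr_append] at hp
      rcases hp with hp | hp | ⟨hp1, hp2⟩
      · have hcs : w ∈ colliders (s₀ :: rest) := by
          rw [← colliders_rev hpG.chain]
          exact mem_colliders_iff.mpr ⟨p, hp, hpw, hh, htl⟩
        obtain ⟨d, hdZ, hdesc⟩ := hact.2 w hcs
        exact ⟨d, Or.inr hdZ, desc_under hdesc⟩
      · simp at hp
      · rw [hRlast, Option.some_inj] at hp1
        have hwt : w = t := by rw [← hpw, ← hp1]; simpa using hs₀1
        refine ⟨t, Or.inl rfl, ?_⟩
        rw [hwt]
        exact Relation.ReflTransGen.refl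
end

section
/- Let G be a mixed graph, t a vertex, and G^t_overline(B) the graph obtained from G by removing all edges into the set B and adding a new vertex F_t with a single directed edge F_t → t. Suppose every directed edge out of t in G points into B. Then for any vertex y ≠ t and any conditioning set S with t ∉ S and no vertex of S a descendant of t in G^t_overline(B): every path from F_t to y in G^t_overline(B) is blocked by S. Consequently y is d-separated from F_t given S in G^t_overline(B). -/
open MixedGraph in
/-- The graph `G^t_overline(B)` on `Option V`: all edges into the set `B` are
removed, and a new vertex `F_t = none` is added with a single directed edge
`F_t → t`. -/
def MixedGraph.augment {V : Type} (G : MixedGraph V) (t : V) (B : Set V) :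
    MixedGraph (Option V) where
  dir u v :=
    (∃ a c, u = some a ∧ v = some c ∧ G.dir a c ∧ c ∉ B) ∨ (u = none ∧ v = some t)
  bi u v :=
    ∃ a c, u = some a ∧ v = some c ∧ G.bi a c ∧ a ∉ B ∧ c ∉ B
  bi_symm := by
    rintro u v ⟨a, c, hu, hv, h1, h2, h3⟩
    exact ⟨c, a, hv, hu, G.bi_symm h1, h3, h2⟩


namespace MixedGraph

variable {V : Type}

lemma aug_not_dir_none {G : MixedGraph V} {t : V} {B : Set V} {u : Option V} :
    ¬ (G.augment t B).dir u none := by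
  rintro (⟨a, c, -, h, -⟩ | ⟨-, h⟩) <;> cases h

lemma aug_not_bi_none_left {G : MixedGraph V} {t : V} {B : Set V} {v : Option V} :
    ¬ (G.augment t B).bi none v := by
  rintro ⟨a, c, h, -⟩; cases h

lemma aug_not_bi_none_right {G : MixedGraph V} {t : V} {B : Set V} {u : Option V} :
    ¬ (G.augment t B).bi u none := by
  rintro ⟨a, c, -, h, -⟩; cases h

lemma aug_dir_none {G : MixedGraph V} {t : V} {B : Set V} {v : Option V}
    (h : (G.augment t B).dir none v) : v = some t := by
  rcases h with ⟨a, c, h, -⟩ | ⟨-, h⟩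
  · cases h
  · exact h

lemma aug_not_dir_t {G : MixedGraph V} {t : V} {B : Set V}
    (hout : ∀ v, G.dir t v → v ∈ B) {v : Option V} :
    ¬ (G.augment t B).dir (some t) v := by
  rintro (⟨a, c, ha, hc, hd, hB⟩ | ⟨h, -⟩)
  · injection ha with ha'; subst ha'; exact hB (hout _ hd)
  · cases h

lemma interior_subset_targets :
    ∀ (l : List (Step V)) {w : V}, w ∈ interior l → w ∈ l.map (fun s => s.2.2)
  | [], w, h => by simp [interior] at h
  | [s], w, h => by obtain ⟨a, k, b⟩ := s; simp [interior] at h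
  | (a, k, b) :: (c, k', d) :: rest, w, h => by
      rw [show interior ((a, k, b) :: (c, k', d) :: rest)
            = {b} ∪ interior ((c, k', d) :: rest) from rfl, Set.mem_union] at h
      rcases h with h | h
      · simp only [Set.mem_singleton_iff] at h
        subst h; simp
      · have := interior_subset_targets ((c, k', d) :: rest) h
        simp only [List.map_cons, List.mem_cons] at this ⊢
        tauto

/-- Backward direction: any path from `some x` (with `x ≠ t`) to `F_t = none`
is blocked. -/
lemma aux_block (G : MixedGraph V) (t : V) (B : Set V)
    (hout : ∀ v, G.dir t v → v ∈ B) (S : Set (Option V))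
    (hS : ∀ w, (G.augment t B).desc (some t) w → w ∉ S) :
    ∀ (steps : List (Step (Option V))) (x : V), x ≠ t →
      (G.augment t B).IsPath (some x) none steps →
      ¬ (G.augment t B).Active S steps := by
  intro steps
  induction steps with
  | nil => intro x _ hp _; exact hp.nonempty rfl
  | cons s rest ih =>
    intro x hxt hp hact
    obtain ⟨u0, k, v0⟩ := s
    have hu0 : u0 = some x := by
      have := hp.startOK; simpa using this
    subst hu0
    cases rest with
    | nil =>
      have hv0 : v0 = none := by simpa using hp.endOK
      subst hv0
      have hst : (G.augment t B).stepOK (some x, k, none) := hp.edges _ (by simp)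
      cases k with
      | fw => exact aug_not_dir_none hst
      | bw => exact hxt (Option.some.inj (aug_dir_none hst))
      | bd => exact aug_not_bi_none_right hst
    | cons s2 rest2 =>
      obtain ⟨c, k', d⟩ := s2
      obtain ⟨hv0c, hchain2⟩ := hp.chain
      subst hv0c
      have hst1 : (G.augment t B).stepOK (some x, k, v0) := hp.edges _ (by simp)
      have hst2 : (G.augment t B).stepOK (v0, k', d) := hp.edges _ (by simp)
      obtain ⟨cv, rfl⟩ : ∃ cv, v0 = some cv := by
        cases v0 with
        | none =>
          exfalso
          cases k with
          | fw => exact aug_not_dir_none hst1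
          | bw => exact hxt (Option.some.inj (aug_dir_none hst1))
          | bd => exact aug_not_bi_none_right hst1
        | some cv => exact ⟨cv, rfl⟩
      by_cases hct : cv = t
      · subst hct
        have hk : headArrow k := by
          cases k with
          | fw => trivial
          | bw => exact absurd hst1 (aug_not_dir_t hout)
          | bd => trivial
        have hk' : tailArrow k' := by
          cases k' with
          | fw => exact absurd hst2 (aug_not_dir_t hout)
          | bw => trivial
          | bd => trivial
        have hcol : (some cv : Option V) ∈
            colliders ((some x, k, some cv) :: (some cv, k', d) :: rest2) :=
          Or.inl ⟨rfl, hk, hk'⟩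
        obtain ⟨w, hwS, hwd⟩ := hact.2 _ hcol
        exact hS w hwd hwS
      · -- recurse on the tail
        have hnd := hp.nodup
        simp only [verts, List.map_cons] at hnd
        have hnd' := hnd.of_cons
        -- hnd' : (some cv :: d :: rest2.map ...).Nodup
        have hcvnot : (some cv : Option V) ∉
            ((some cv, k', d) :: rest2).map (fun s => s.2.2) := by
          simp only [List.map_cons]
          exact (List.nodup_cons.mp hnd').1
        have hpath : (G.augment t B).IsPath (some cv) none ((some cv, k', d) :: rest2) := by
          refine ⟨List.cons_ne_nil _ _, by simp, ?_, hchain2,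
            fun s hs => hp.edges s (List.mem_cons_of_mem _ hs), ?_⟩
          · have := hp.endOK
            rwa [List.getLast?_cons_cons] at this
          · simpa [verts] using hnd'
        refine ih cv hct hpath ⟨?_, ?_⟩
        · intro w hw
          refine hact.1 w ⟨Or.inr hw.1, ?_⟩
          rintro (⟨rfl, -, -⟩ | hcw)
          · exact hcvnot (interior_subset_targets _ hw.1)
          · exact hw.2 hcw
        · intro w hw
          exact hact.2 w (Or.inr hw)

end MixedGraph

open MixedGraph in
/-- If every directed edge out of `t` in `G` points into `B`, then in
`G^t_overline(B)` every path from `F_t` to any `y ≠ t` is blocked by any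
conditioning set `S` with `t ∉ S` and containing no descendant of `t` in
`G^t_overline(B)`; consequently `y` is d-separated from `F_t` given `S`. -/
theorem Ft_dsep_y {V : Type} (G : MixedGraph V) (t : V) (B : Set V)
    (hout : ∀ v, G.dir t v → v ∈ B)
    (y : V) (hyt : y ≠ t) (S : Set (Option V))
    (htS : some t ∉ S)
    (hS : ∀ w, (G.augment t B).desc (some t) w → w ∉ S) :
    (∀ steps, (G.augment t B).IsPath none (some y) steps →
        ¬ (G.augment t B).Active S steps) ∧
    (G.augment t B).dSep {some y} {none} S := by
  constructor
  · intro steps hp hact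
    cases steps with
    | nil => exact hp.nonempty rfl
    | cons s rest =>
      obtain ⟨u0, k, v0⟩ := s
      have hu0 : u0 = none := by simpa using hp.startOK
      subst hu0
      cases rest with
      | nil =>
        have hv0 : v0 = some y := by simpa using hp.endOK
        subst hv0
        have hst : (G.augment t B).stepOK (none, k, some y) := hp.edges _ (by simp)
        cases k with
        | fw => exact hyt (Option.some.inj (aug_dir_none hst))
        | bw => exact aug_not_dir_none hst
        | bd => exact aug_not_bi_none_left hst
      | cons s2 rest2 =>
        obtain ⟨c, k', d⟩ := s2
        obtain ⟨hv0c, hchain2⟩ := hp.chain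
        subst hv0c
        have hst1 : (G.augment t B).stepOK (none, k, v0) := hp.edges _ (by simp)
        have hst2 : (G.augment t B).stepOK (v0, k', d) := hp.edges _ (by simp)
        have hk : k = .fw := by
          cases k with
          | fw => rfl
          | bw => exact absurd hst1 aug_not_dir_none
          | bd => exact absurd hst1 aug_not_bi_none_left
        subst hk
        have hc : v0 = some t := aug_dir_none hst1
        subst hc
        have hk' : MixedGraph.tailArrow k' := by
          cases k' with
          | fw => exact absurd hst2 (aug_not_dir_t hout)
          | bw => trivial
          | bd => trivial
        have hcol : (some t : Option V) ∈
            MixedGraph.colliders ((none, .fw, some t) :: (some t, k', d) :: rest2) :=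
          Or.inl ⟨rfl, trivial, hk'⟩
        obtain ⟨w, hwS, hwd⟩ := hact.2 _ hcol
        exact hS w hwd hwS
  · intro u hu v hv steps hp
    rcases hu with rfl
    rcases hv with rfl
    exact MixedGraph.aux_block G t B hout S hS steps y hyt hp
end
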